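/- For the van der Corput sequence (x_m) in base 2, there is a constant C > 0 such that for all N ≥ 1 and all B with 0 ≤ B ≤ 1, |#{1 ≤ m ≤ N : x_m ≤ B} - N·B| ≤ C·(log(N) + 1). -/

import Mathlib

/-!
The van der Corput map satisfies `vdc (2a) = vdc a / 2` and `vdc (2a + 1) = 1/2 + vdc a / 2`.
Hence among `m < n`, the condition `vdc m ≤ B` selects, for `B < 1/2`, exactly the even `m = 2a`
with `vdc a ≤ 2B`, and for `B ≥ 1/2`, all even `m` together with the odd `m = 2a + 1` with
`vdc a ≤ 2B - 1`. In both cases the discrepancy `count - n B` changes by an amount in `[0, 1/2]`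
when `n` is halved; after `⌈log₂ n⌉` halvings only `n ≤ 1` is left, so
`|count - n B| ≤ 1 + ⌈log₂ n⌉ / 2`.
-/

/-- The van der Corput sequence in base 2: binary radical inverse of `m`. -/
noncomputable def vdc (m : ℕ) : ℝ :=
  ∑ j ∈ Finset.range m, if m.testBit j then (1 : ℝ) / 2 ^ (j + 1) else 0

open Finset

theorem Nat.count_eq_count_even_add_count_odd (p : ℕ → Prop) [DecidablePred p] (n : ℕ) :
    count p n =
      count (fun a => p (2 * a)) ((n + 1) / 2) + count (fun a => p (2 * a + 1)) (n / 2) := by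
  induction n with
  | zero => simp
  | succ n ih =>
    obtain ⟨k, rfl | rfl⟩ := n.even_or_odd'
    · rw [show (2 * k + 1 + 1) / 2 = k + 1 by omega, show (2 * k + 1) / 2 = k by omega]
      rw [show (2 * k + 1) / 2 = k by omega, show 2 * k / 2 = k by omega] at ih
      rw [count_succ, ih, count_succ]
      ring
    · rw [show (2 * k + 1 + 1 + 1) / 2 = k + 1 by omega, show (2 * k + 1 + 1) / 2 = k + 1 by omega]
      rw [show (2 * k + 1 + 1) / 2 = k + 1 by omega, show (2 * k + 1) / 2 = k by omega] at ih
      rw [count_succ, ih, count_succ (fun a => p (2 * a + 1))]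
      ring

theorem Nat.ncard_setOf_one_le_le_eq_count (p : ℕ → Prop) [DecidablePred p] (N : ℕ) :
    {m : ℕ | 1 ≤ m ∧ m ≤ N ∧ p m}.ncard = count (fun k => p (k + 1)) N := by
  have : {m : ℕ | 1 ≤ m ∧ m ≤ N ∧ p m} = (· + 1) '' ↑{k ∈ range N | p (k + 1)} := by
    ext m
    simp only [coe_filter, mem_range, Set.mem_image, Set.mem_ofPred_eq]
    constructor
    · rintro ⟨h1, h2, hp⟩
      exact ⟨m - 1, by rw [Nat.sub_add_cancel h1]; exact ⟨by omega, hp⟩, by omega⟩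
    · rintro ⟨k, ⟨hk, hp⟩, rfl⟩
      exact ⟨by omega, by omega, hp⟩
  rw [this, Set.ncard_image_of_injective _ (add_left_injective 1), Set.ncard_coe_finset,
    count_eq_card_filter_range]

lemma Nat.clog_two_succ_le_two_mul_log_add_one {N : ℕ} (hN : 1 ≤ N) :
    (clog 2 (N + 1) : ℝ) ≤ 2 * Real.log N + 1 := by
  have h1 : clog 2 (N + 1) ≤ log 2 N + 1 :=
    clog_le_of_le_pow (lt_pow_succ_log_self one_lt_two N)
  have h2 : (log 2 N : ℝ) ≤ Real.logb 2 N := Real.natLog_le_logb N 2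
  have h3 : Real.logb 2 N ≤ 2 * Real.log N := by
    rw [Real.logb, div_le_iff₀ (Real.log_pos one_lt_two)]
    nlinarith [Real.log_two_gt_d9, Real.log_nonneg (show (1 : ℝ) ≤ N by exact_mod_cast hN)]
  have : (clog 2 (N + 1) : ℝ) ≤ log 2 N + 1 := by exact_mod_cast h1
  linarith

lemma vdc_eq_sum_range {m K : ℕ} (h : m ≤ K) :
    vdc m = ∑ j ∈ range K, if m.testBit j then (1 : ℝ) / 2 ^ (j + 1) else 0 := by
  refine sum_subset (range_subset_range.2 h) fun j _ hj => ?_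
  have : m < 2 ^ j :=
    m.lt_two_pow_self.trans_le (Nat.pow_le_pow_right two_pos (by simpa using hj))
  simp [Nat.testBit_lt_two_pow this]

@[simp] lemma vdc_zero : vdc 0 = 0 := by simp [vdc]

lemma vdc_eq_mod_two_add_vdc_div_two (n : ℕ) : vdc n = (n % 2 : ℕ) / 2 + vdc (n / 2) / 2 := by
  rw [vdc_eq_sum_range n.le_succ, vdc_eq_sum_range (Nat.div_le_self n 2), sum_range_succ', sum_div,
    add_comm]
  congr 1
  · rcases Nat.mod_two_eq_zero_or_one n with h | h <;> simp [h]
  · refine sum_congr rfl fun j _ => ?_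
    rw [Nat.testBit_add_one]
    split_ifs <;> ring

lemma vdc_two_mul (m : ℕ) : vdc (2 * m) = vdc m / 2 := by
  simp [vdc_eq_mod_two_add_vdc_div_two (2 * m)]

lemma vdc_two_mul_add_one (m : ℕ) : vdc (2 * m + 1) = 1 / 2 + vdc m / 2 := by
  simp [vdc_eq_mod_two_add_vdc_div_two (2 * m + 1), Nat.mul_add_div]

lemma vdc_nonneg (m : ℕ) : 0 ≤ vdc m :=
  sum_nonneg fun j _ => by split_ifs <;> positivity

lemma vdc_lt_one (m : ℕ) : vdc m < 1 := by
  induction m using Nat.strong_induction_on with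
  | _ m ih =>
    rcases m.eq_zero_or_pos with rfl | hm
    · simp
    have hdiv := ih (m / 2) (Nat.div_lt_self hm one_lt_two)
    have hmod : ((m % 2 : ℕ) : ℝ) ≤ 1 := by
      exact_mod_cast Nat.le_of_lt_succ (Nat.mod_lt m two_pos)
    rw [vdc_eq_mod_two_add_vdc_div_two]
    linarith

lemma count_vdc_le_of_lt_half {B : ℝ} (hB : B < 1 / 2) (n : ℕ) :
    Nat.count (vdc · ≤ B) n = Nat.count (vdc · ≤ 2 * B) ((n + 1) / 2) := by
  have hodd : Nat.count (fun a => vdc (2 * a + 1) ≤ B) (n / 2) = 0 :=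
    Nat.count_of_forall_not fun a _ => by rw [vdc_two_mul_add_one]; linarith [vdc_nonneg a]
  rw [Nat.count_eq_count_even_add_count_odd, hodd, add_zero]
  congr! 2 with a
  rw [vdc_two_mul]
  constructor <;> intro <;> linarith

lemma count_vdc_le_of_half_le {B : ℝ} (hB : 1 / 2 ≤ B) (n : ℕ) :
    Nat.count (vdc · ≤ B) n = (n + 1) / 2 + Nat.count (vdc · ≤ 2 * B - 1) (n / 2) := by
  have heven : Nat.count (fun a => vdc (2 * a) ≤ B) ((n + 1) / 2) = (n + 1) / 2 :=
    Nat.count_of_forall fun a _ => by rw [vdc_two_mul]; linarith [vdc_lt_one a]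
  rw [Nat.count_eq_count_even_add_count_odd, heven]
  congr! 3 with a
  rw [vdc_two_mul_add_one]
  constructor <;> intro <;> linarith

theorem abs_count_vdc_le_sub_le_clog {B : ℝ} (hB₀ : 0 ≤ B) (hB₁ : B ≤ 1) (n : ℕ) :
    |(Nat.count (vdc · ≤ B) n : ℝ) - n * B| ≤ 1 + Nat.clog 2 n / 2 := by
  induction n using Nat.strong_induction_on generalizing B with
  | _ n ih =>
  rcases lt_or_ge n 2 with hn | hn
  · interval_cases n
    · simp
    · simp [Nat.count_one, hB₀, abs_le]
      linarith
  have hr : ((n % 2 : ℕ) : ℝ) ≤ 1 := by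
    exact_mod_cast Nat.le_of_lt_succ (Nat.mod_lt n two_pos)
  have hn_eq : (n : ℝ) = 2 * (n / 2 : ℕ) + (n % 2 : ℕ) := by
    exact_mod_cast (Nat.div_add_mod n 2).symm
  have hn'_eq : (((n + 1) / 2 : ℕ) : ℝ) = (n / 2 : ℕ) + (n % 2 : ℕ) := by norm_cast; omega
  set r : ℝ := ((n % 2 : ℕ) : ℝ)
  have hclog : (Nat.clog 2 n : ℝ) = Nat.clog 2 ((n + 1) / 2) + 1 := by
    exact_mod_cast Nat.clog_of_two_le one_lt_two hn
  rcases lt_or_ge B (1 / 2) with hB | hB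
  · have ih' := abs_le.1 (ih ((n + 1) / 2) (by omega) (B := 2 * B) (by linarith) (by linarith))
    have : 0 ≤ r * B ∧ r * B ≤ 1 / 2 := ⟨by positivity, by nlinarith⟩
    rw [count_vdc_le_of_lt_half hB, abs_le]
    constructor <;> nlinarith
  · have ih' := abs_le.1 (ih (n / 2) (by omega) (B := 2 * B - 1) (by linarith) (by linarith))
    have hmono : (Nat.clog 2 (n / 2) : ℝ) ≤ Nat.clog 2 ((n + 1) / 2) := by
      exact_mod_cast Nat.clog_mono_right 2 (by omega)
    have : 0 ≤ r * (1 - B) ∧ r * (1 - B) ≤ 1 / 2 :=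
      ⟨mul_nonneg (by positivity) (by linarith), by nlinarith⟩
    rw [count_vdc_le_of_half_le hB, abs_le]
    push_cast
    constructor <;> nlinarith

theorem stmt_5 :
    ∃ C : ℝ, 0 < C ∧ ∀ N : ℕ, 1 ≤ N → ∀ B : ℝ, 0 ≤ B → B ≤ 1 →
      |(({m : ℕ | 1 ≤ m ∧ m ≤ N ∧ vdc m ≤ B}.ncard : ℝ)) - N * B| ≤
        C * (Real.log N + 1) := by
  refine ⟨3, by norm_num, fun N hN B hB₀ hB₁ => ?_⟩
  have hcount : ({m : ℕ | 1 ≤ m ∧ m ≤ N ∧ vdc m ≤ B}.ncard : ℝ) =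
      Nat.count (vdc · ≤ B) (N + 1) - 1 := by
    simp [Nat.ncard_setOf_one_le_le_eq_count, Nat.count_succ', hB₀]
  have hdisc := abs_le.1 (abs_count_vdc_le_sub_le_clog hB₀ hB₁ (N + 1))
  have hclog := Nat.clog_two_succ_le_two_mul_log_add_one hN
  have hlog : 0 ≤ Real.log N := Real.log_nonneg (by exact_mod_cast hN)
  push_cast at hdisc
  rw [hcount, abs_le]
  constructor <;> linarith
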